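/- For every real parameter c < −3, every periodic point of f_c is real: if z ∈ ℂ satisfies f_c^{∘n}(z) = z for some n ≥ 1, then z ∈ ℝ. Consequently, every multiplier (f_c^{∘n})'(z) of a periodic orbit of f_c is real. -/

import Mathlib

open Complex Set Filter Topology

noncomputable section

/-- The quadratic polynomial `f_c(z) = z² + c`. -/
def fc (c z : ℂ) : ℂ := z ^ 2 + c

/-- The `n`-th iterate of `f_c`. -/
def fIter (c : ℂ) (n : ℕ) : ℂ → ℂ := (fc c)^[n]

/-- The multiplier: the derivative of the `n`-th iterate of `f_c` at `z`. -/
def multiplier (c : ℂ) (n : ℕ) (z : ℂ) : ℂ := deriv (fIter c n) z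

/-- `z` is a periodic point of exact period `n ≥ 1` of `f_c`. -/
def ExactPeriodic (c : ℂ) (n : ℕ) (z : ℂ) : Prop :=
  1 ≤ n ∧ fIter c n z = z ∧ ∀ m, 1 ≤ m → m < n → fIter c m z ≠ z

/-- The forward orbit of `z` under `f_c`. -/
def orbitOf (c z : ℂ) : Set ℂ := Set.range fun k => fIter c k z

/-- `ρ` is a local multiplier function on `U` of the periodic orbit of the periodic
point `z₀` (of exact period `n`) of `f_{c₀}`. -/
def IsLocalMultiplier (c₀ : ℂ) (n : ℕ) (z₀ : ℂ) (U : Set ℂ) (ρ : ℂ → ℂ) : Prop :=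
  IsOpen U ∧ IsConnected U ∧ c₀ ∈ U ∧
    ∃ p : ℂ → ℂ, AnalyticOnNhd ℂ p U ∧ p c₀ ∈ orbitOf c₀ z₀ ∧
      (∀ c ∈ U, ExactPeriodic c n (p c)) ∧ ∀ c ∈ U, ρ c = multiplier c n (p c)

/-- `ν` is a ν-function on `U` of the periodic orbit of `z₀`. -/
def IsNuFunction (c₀ : ℂ) (n : ℕ) (z₀ : ℂ) (U : Set ℂ) (ν : ℂ → ℂ) : Prop :=
  ∃ ρ : ℂ → ℂ, IsLocalMultiplier c₀ n z₀ U ρ ∧ (∀ c ∈ U, ρ c ≠ 0) ∧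
    ∀ c ∈ U, ν c = deriv ρ c / (n * ρ c)

/-- `X_n`: the set of critical points of period-`n` multipliers. -/
def Xn (n : ℕ) : Set ℂ :=
  {c₀ | ∃ (z₀ : ℂ) (U : Set ℂ) (ρ : ℂ → ℂ),
    ExactPeriodic c₀ n z₀ ∧ IsLocalMultiplier c₀ n z₀ U ρ ∧ deriv ρ c₀ = 0}

/-- The accumulation set `X` of critical points of multipliers. -/
def Xacc : Set ℂ :=
  ⋂ k ∈ {k : ℕ | 1 ≤ k}, closure (⋃ n ∈ {n : ℕ | k ≤ n}, Xn n)

/-- The Mandelbrot set. -/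
def Mset : Set ℂ := {c | Bornology.IsBounded (Set.range fun n => fIter c n 0)}

/-- The set `Y_c`. -/
def Yset (c : ℂ) : Set ℂ :=
  closure {w | ∃ (n : ℕ) (z : ℂ) (U : Set ℂ) (ν : ℂ → ℂ),
    ExactPeriodic c n z ∧ 1 < ‖multiplier c n z‖ ∧
    IsNuFunction c n z U ν ∧ ν c = w}

/-- The filled Julia set of `f_c`. -/
def filledJulia (c : ℂ) : Set ℂ :=
  {z | Bornology.IsBounded (Set.range fun n => fIter c n z)}

/-- The Julia set of `f_c`. -/
def juliaSet (c : ℂ) : Set ℂ := frontier (filledJulia c)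

/-!
Let `w₀ = z, w₁, …` be a periodic orbit of `f_c` and `M` the largest of the `‖wₖ‖`, attained
at `w_{k₀}`. Then `M ≥ ‖w_{k₀+1}‖ ≥ M² + c`, which for `c < -3` forces `r := 4(-c - M) > 1`.
Since `Re w_{k+1} = (Re wₖ)² - (Im wₖ)² + c ≥ -M`, we get `(Re wₖ)² ≥ -c - M`, so
`(Im w_{k+1})² = 4 (Re wₖ)² (Im wₖ)² ≥ r (Im wₖ)²`: the squared imaginary part grows by the
factor `r` along the orbit, which is impossible on a cycle unless it vanishes. The multiplier is
then the derivative at a real point of a polynomial with real coefficients.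
-/

open Function

section PeriodicOrbit

variable {α : Type*} {g : α → α} {x : α} {n : ℕ}

theorem Function.IsPeriodicPt.exists_forall_iterate_le {β : Type*} [LinearOrder β]
    (hx : IsPeriodicPt g n x) (hn : 0 < n) (φ : α → β) : ∃ k₀, ∀ k, φ (g^[k] x) ≤ φ (g^[k₀] x) := by
  obtain ⟨k₀, -, hk₀⟩ :=
    (Finset.range n).exists_max_image (fun k => φ (g^[k] x)) ⟨0, Finset.mem_range.mpr hn⟩
  refine ⟨k₀, fun k => ?_⟩
  rw [← hx.iterate_mod_apply k]
  exact hk₀ _ (Finset.mem_range.mpr (Nat.mod_lt k hn))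

theorem Function.IsPeriodicPt.eq_zero_of_expanding (hx : IsPeriodicPt g n x) (hn : 0 < n)
    {φ : α → ℝ} (hφ : 0 ≤ φ x) {r : ℝ} (hr : 1 < r)
    (h : ∀ k, r * φ (g^[k] x) ≤ φ (g^[k + 1] x)) : φ x = 0 := by
  have hgrow : ∀ k, r ^ k * φ x ≤ φ (g^[k] x) := by
    intro k
    induction k with
    | zero => simp
    | succ k ih =>
      calc r ^ (k + 1) * φ x = r * (r ^ k * φ x) := by ring
        _ ≤ r * φ (g^[k] x) := by gcongr
        _ ≤ φ (g^[k + 1] x) := h k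
  have hback : r ^ n * φ x ≤ φ x := by simpa [hx.eq] using hgrow n
  have hrn : 1 < r ^ n := one_lt_pow₀ hr hn.ne'
  nlinarith

end PeriodicOrbit

theorem differentiable_fc (c : ℂ) : Differentiable ℂ (fc c) :=
  (differentiable_pow 2).add_const c

theorem deriv_fc (c w : ℂ) : deriv (fc c) w = 2 * w := by
  unfold fc
  simp

theorem im_iterate_fc_eq_zero (c : ℝ) (k : ℕ) {z : ℂ} (hz : z.im = 0) :
    ((fc c)^[k] z).im = 0 := by
  induction k with
  | zero => simpa
  | succ k ih =>
    rw [iterate_succ_apply']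
    simp [fc, pow_two, ih]

theorem im_deriv_iterate_fc_eq_zero (c : ℝ) (n : ℕ) {z : ℂ} (hz : z.im = 0) :
    (deriv (fc c)^[n] z).im = 0 := by
  induction n with
  | zero => simp
  | succ k ih =>
    have hk : DifferentiableAt ℂ (fc c)^[k] z :=
      ((differentiable_fc c).iterate k).differentiableAt
    rw [iterate_succ', deriv_comp z (differentiable_fc c).differentiableAt hk, deriv_fc]
    simp [im_iterate_fc_eq_zero c k hz, ih]

theorem sq_norm_add_le_norm_fc {c : ℝ} (hc : c ≤ 0) (w : ℂ) : ‖w‖ ^ 2 + c ≤ ‖fc c w‖ := by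
  have h := norm_sub_norm_le (w ^ 2) (-(c : ℂ))
  rw [sub_neg_eq_add, norm_pow, norm_neg, Complex.norm_real, Real.norm_of_nonpos hc] at h
  simpa [fc] using h

theorem mul_sq_im_le_sq_im_fc {c M : ℝ} {w : ℂ} (hw : ‖fc c w‖ ≤ M) :
    4 * (-c - M) * w.im ^ 2 ≤ (fc c w).im ^ 2 := by
  have hre : (fc c w).re = w.re ^ 2 - w.im ^ 2 + c := by simp [fc, pow_two]
  have him : (fc c w).im = 2 * w.re * w.im := by simp [fc, pow_two]; ring
  have hlow : -M ≤ (fc c w).re := by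
    linarith [neg_abs_le (fc c w).re, Complex.abs_re_le_norm (fc c w)]
  rw [him]
  nlinarith [sq_nonneg w.im, mul_nonneg (sq_nonneg w.im) (sq_nonneg w.im)]

/-- Solving `M² - M + c ≤ 0` gives `M ≤ (1 + √(1 - 4c)) / 2`, which is `< -c - 1/4` once
`c < -3`. -/
theorem one_lt_four_mul_neg_sub_of_sq_add_le {c M : ℝ} (hc : c < -3) (h : M ^ 2 + c ≤ M) :
    1 < 4 * (-c - M) := by
  nlinarith [sq_nonneg (M + c + 1 / 4), sq_nonneg (c + 3)]

/-- For a real parameter `c < -3`, every periodic point of `f_c` is real, and hence every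
multiplier of a periodic orbit of `f_c` is real. -/
theorem stmt17 (c : ℝ) (hc : c < -3) (n : ℕ) (hn : 1 ≤ n) (z : ℂ)
    (hz : fIter (c : ℂ) n z = z) :
    z.im = 0 ∧ (deriv (fIter (c : ℂ) n) z).im = 0 := by
  have hper : IsPeriodicPt (fc c) n z := hz
  obtain ⟨k₀, hmax⟩ := hper.exists_forall_iterate_le hn (fun w => ‖w‖)
  set M := ‖(fc c)^[k₀] z‖
  have hM : M ^ 2 + c ≤ M := by
    have := sq_norm_add_le_norm_fc (by linarith) ((fc c)^[k₀] z)
    rw [← iterate_succ_apply' (fc c)] at this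
    exact this.trans (hmax (k₀ + 1))
  have him : z.im = 0 := by
    refine pow_eq_zero_iff two_ne_zero |>.mp <|
      hper.eq_zero_of_expanding hn (φ := fun w => w.im ^ 2) (sq_nonneg _)
        (one_lt_four_mul_neg_sub_of_sq_add_le hc hM) fun k => ?_
    rw [iterate_succ_apply']
    exact mul_sq_im_le_sq_im_fc (by rw [← iterate_succ_apply' (fc c)]; exact hmax (k + 1))
  exact ⟨him, im_deriv_iterate_fc_eq_zero c n him⟩
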